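/- arXiv:2605.11239 — 3 statements merged into one kernel-verified Lean document; each statement's English description precedes it below -/
import Mathlib

section
/- (Proposition 3.1) For any nonempty D_r ⊆ D with complement D_f = D \ D_r (taken, without loss of generality, as the first |D_f| points of D), let θ̂* and θ̂_r* denote the unique minimizers of L̂_D and L̂_{D_r} respectively. Then θ̂_r* − θ̂* = J(X)ᵀ Δα_r*, where Δα_r* ∈ ℝ^{d_out·n} has top block (1/λ) ∇_{f^lin(X_f, θ̂*)} L̂_D (indexed by the points of D_f) and bottom block −(1/λ) ( ∇_{f^lin(X_r, θ̂_r*)} L̂_{D_r} − ∇_{f^lin(X_r, θ̂*)} L̂_D ) (indexed by the points of D_r). -/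
open Finset Matrix

noncomputable section

/-- Squared ℓ₂ norm of a finitely-indexed real vector. -/
def sqnorm {ι : Type*} [Fintype ι] (v : ι → ℝ) : ℝ := ∑ i, v i ^ 2

/-- The linearized model `f^lin(x, θ) = f(x, θ') + J(x)(θ - θ')`, where `f0 x = f(x, θ')`
and `J x` is the Jacobian of `f(x, ·)` at `θ'`. -/
def flin {din dout dθ : ℕ}
    (f0 : (Fin din → ℝ) → Fin dout → ℝ)
    (J : (Fin din → ℝ) → Matrix (Fin dout) (Fin dθ) ℝ)
    (θ' : Fin dθ → ℝ) (xt : Fin din → ℝ) (θ : Fin dθ → ℝ) : Fin dout → ℝ :=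
  f0 xt + J xt *ᵥ (θ - θ')

/-- Regularized empirical risk `L̂_S(θ)` of the linearized model over the subset of the
dataset indexed by `S`. -/
def empRisk {din dout dθ n : ℕ}
    (f0 : (Fin din → ℝ) → Fin dout → ℝ)
    (J : (Fin din → ℝ) → Matrix (Fin dout) (Fin dθ) ℝ)
    (θ' : Fin dθ → ℝ) (X : Fin n → Fin din → ℝ) (Y : Fin n → Fin dout → ℝ)
    (ℓ : (Fin dout → ℝ) → (Fin dout → ℝ) → ℝ) (lam : ℝ)
    (S : Finset (Fin n)) (θ : Fin dθ → ℝ) : ℝ :=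
  (S.card : ℝ)⁻¹ * ∑ i ∈ S, (ℓ (flin f0 J θ' (X i) θ) (Y i) + lam / 2 * sqnorm (θ - θ'))

/-- Gradient of the loss `ℓ(·, y)` in its first argument, as a vector. -/
def gradloss {dout : ℕ} (ℓ : (Fin dout → ℝ) → (Fin dout → ℝ) → ℝ)
    (ytgt u : Fin dout → ℝ) : Fin dout → ℝ :=
  fun a => fderiv ℝ (fun v => ℓ v ytgt) u (Pi.single a 1)

/-- Hessian of the loss `ℓ(·, y)` in its first argument, as a matrix. -/
def hessloss {dout : ℕ} (ℓ : (Fin dout → ℝ) → (Fin dout → ℝ) → ℝ)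
    (ytgt u : Fin dout → ℝ) : Fin dout → Fin dout → ℝ :=
  fun a b => fderiv ℝ (fun v => fderiv ℝ (fun w => ℓ w ytgt) v (Pi.single b 1)) u (Pi.single a 1)

/-- Stacked Jacobian `J(X) ∈ ℝ^{d_out·n × d_θ}`, whose `i`-th row block is `J(x_i)`. -/
def JX {din dout dθ n : ℕ}
    (J : (Fin din → ℝ) → Matrix (Fin dout) (Fin dθ) ℝ)
    (X : Fin n → Fin din → ℝ) : Matrix (Fin n × Fin dout) (Fin dθ) ℝ :=
  fun q p => J (X q.1) q.2 p

/-- Empirical NTK Gram matrix `K = K(X, X) = J(X) J(X)ᵀ`. -/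
def Kmat {din dout dθ n : ℕ}
    (J : (Fin din → ℝ) → Matrix (Fin dout) (Fin dθ) ℝ)
    (X : Fin n → Fin din → ℝ) : Matrix (Fin n × Fin dout) (Fin n × Fin dout) ℝ :=
  JX J X * (JX J X)ᵀ

/-- NTK row block `K(x, X) = J(x) J(X)ᵀ ∈ ℝ^{d_out × d_out·n}`. -/
def KxX {din dout dθ n : ℕ}
    (J : (Fin din → ℝ) → Matrix (Fin dout) (Fin dθ) ℝ)
    (X : Fin n → Fin din → ℝ) (xt : Fin din → ℝ) : Matrix (Fin dout) (Fin n × Fin dout) ℝ :=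
  J xt * (JX J X)ᵀ

/-- Reparameterization `φ(Δα) = θ̂* + J(X)ᵀ Δα`. -/
def phi {din dout dθ n : ℕ}
    (J : (Fin din → ℝ) → Matrix (Fin dout) (Fin dθ) ℝ)
    (X : Fin n → Fin din → ℝ) (θstar : Fin dθ → ℝ)
    (Δα : Fin n × Fin dout → ℝ) : Fin dθ → ℝ :=
  θstar + (JX J X)ᵀ *ᵥ Δα

/-- Reparameterized model `g^lin(x, Δα) = f^lin(x, θ̂*) + K(x, X) Δα`. -/
def glin {din dout dθ n : ℕ}
    (f0 : (Fin din → ℝ) → Fin dout → ℝ)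
    (J : (Fin din → ℝ) → Matrix (Fin dout) (Fin dθ) ℝ)
    (θ' : Fin dθ → ℝ) (X : Fin n → Fin din → ℝ) (θstar : Fin dθ → ℝ)
    (xt : Fin din → ℝ) (Δα : Fin n × Fin dout → ℝ) : Fin dout → ℝ :=
  flin f0 J θ' xt θstar + KxX J X xt *ᵥ Δα

/-- Dual risk `L̃_S(Δα) = (1/|S|) Σ_{(x,y)∈S} ( ℓ(g^lin(x, Δα), y) + (λ/2)‖φ(Δα) − θ'‖₂² )`. -/
def dualRisk {din dout dθ n : ℕ}
    (f0 : (Fin din → ℝ) → Fin dout → ℝ)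
    (J : (Fin din → ℝ) → Matrix (Fin dout) (Fin dθ) ℝ)
    (θ' : Fin dθ → ℝ) (X : Fin n → Fin din → ℝ) (Y : Fin n → Fin dout → ℝ)
    (ℓ : (Fin dout → ℝ) → (Fin dout → ℝ) → ℝ) (lam : ℝ) (θstar : Fin dθ → ℝ)
    (S : Finset (Fin n)) (Δα : Fin n × Fin dout → ℝ) : ℝ :=
  (S.card : ℝ)⁻¹ *
    ∑ i ∈ S, (ℓ (glin f0 J θ' X θstar (X i) Δα) (Y i) +
      lam / 2 * sqnorm (phi J X θstar Δα - θ'))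

/-- The dual coefficient vector `Δα_r*` of Proposition 3.1: on the forget indices
(`q.1 ∉ Dr`) it is `(1/λ) ∇_{f^lin(X_f, θ̂*)} L̂_D`, and on the retain indices (`q.1 ∈ Dr`)
it is `−(1/λ)( ∇_{f^lin(X_r, θ̂_r*)} L̂_{D_r} − ∇_{f^lin(X_r, θ̂*)} L̂_D )`. -/
def dalpha {din dout dθ n : ℕ}
    (f0 : (Fin din → ℝ) → Fin dout → ℝ)
    (J : (Fin din → ℝ) → Matrix (Fin dout) (Fin dθ) ℝ)
    (θ' : Fin dθ → ℝ) (X : Fin n → Fin din → ℝ) (Y : Fin n → Fin dout → ℝ)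
    (ℓ : (Fin dout → ℝ) → (Fin dout → ℝ) → ℝ) (lam : ℝ)
    (Dr : Finset (Fin n)) (θstar θrstar : Fin dθ → ℝ) :
    Fin n × Fin dout → ℝ :=
  fun q =>
    if q.1 ∈ Dr then
      -lam⁻¹ * ((Dr.card : ℝ)⁻¹ * gradloss ℓ (Y q.1) (flin f0 J θ' (X q.1) θrstar) q.2
        - (n : ℝ)⁻¹ * gradloss ℓ (Y q.1) (flin f0 J θ' (X q.1) θstar) q.2)
    else
      lam⁻¹ * ((n : ℝ)⁻¹ * gradloss ℓ (Y q.1) (flin f0 J θ' (X q.1) θstar) q.2)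

/-!
A minimizer `θ̂` of `L̂_S` is a stationary point, and setting the directional derivatives of
`L̂_S` to zero gives the representer identity `θ̂ − θ' = −(1/λ) J(X)ᵀ g_S(θ̂)`, where `g_S(θ̂)` is
`∇_{f^lin(X_S, θ̂)} L̂_S` extended by zero off `S`. Subtracting the identities for `S = D_r` and
`S = D` gives the claim, because `Δα_r*` is exactly `−(1/λ) (g_{D_r}(θ̂_r*) − g_D(θ̂*))`.
-/

lemma ContinuousLinearMap.apply_eq_dotProduct_single {d : ℕ} (L : (Fin d → ℝ) →L[ℝ] ℝ)
    (w : Fin d → ℝ) : L w = w ⬝ᵥ fun a => L (Pi.single a 1) := by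
  have h := L.toLinearMap.pi_apply_eq_sum_univ w
  simp only [ContinuousLinearMap.coe_coe, smul_eq_mul] at h
  rw [h]
  simp only [dotProduct]
  congr! 3 with i
  ext j
  simp [Pi.single_apply, eq_comm]

lemma sqnorm_eq_dotProduct {ι : Type*} [Fintype ι] (v : ι → ℝ) : sqnorm v = v ⬝ᵥ v := by
  simp [sqnorm, dotProduct, sq]

lemma hasDerivAt_sqnorm_add_smul {ι : Type*} [Fintype ι] (a v : ι → ℝ) :
    HasDerivAt (fun t : ℝ => sqnorm (a + t • v)) (2 * (a ⬝ᵥ v)) 0 := by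
  have hexp : ∀ t : ℝ, sqnorm (a + t • v) = sqnorm a + t * (2 * (a ⬝ᵥ v)) + t ^ 2 * sqnorm v := by
    intro t
    simp only [sqnorm_eq_dotProduct, add_dotProduct, dotProduct_add, dotProduct_smul,
      smul_dotProduct, dotProduct_comm v a, smul_eq_mul]
    ring
  simp only [hexp]
  have h := (((hasDerivAt_id' (0 : ℝ)).mul_const (2 * (a ⬝ᵥ v))).const_add (sqnorm a)).fun_add
    ((hasDerivAt_pow 2 (0 : ℝ)).mul_const (sqnorm v))
  exact h.congr_deriv (by norm_num)

section LinearizedRisk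

variable {din dout dθ n : ℕ} (f0 : (Fin din → ℝ) → Fin dout → ℝ)
  (J : (Fin din → ℝ) → Matrix (Fin dout) (Fin dθ) ℝ) (θ' : Fin dθ → ℝ)
  (X : Fin n → Fin din → ℝ) (Y : Fin n → Fin dout → ℝ)
  (ℓ : (Fin dout → ℝ) → (Fin dout → ℝ) → ℝ) (lam : ℝ)

/-- `∇_{f^lin(X_S, θ)} L̂_S`, extended by zero to the indices outside `S`. -/
def stackedGrad (S : Finset (Fin n)) (θ : Fin dθ → ℝ) : Fin n × Fin dout → ℝ :=
  fun q => if q.1 ∈ S then (S.card : ℝ)⁻¹ * gradloss ℓ (Y q.1) (flin f0 J θ' (X q.1) θ) q.2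
    else 0

lemma flin_add_smul (x : Fin din → ℝ) (θ v : Fin dθ → ℝ) (t : ℝ) :
    flin f0 J θ' x (θ + t • v) = flin f0 J θ' x θ + t • (J x *ᵥ v) := by
  unfold flin
  rw [add_sub_right_comm, mulVec_add, mulVec_smul]
  abel

lemma hasDerivAt_loss_flin_add_smul (x : Fin din → ℝ) (y : Fin dout → ℝ) (θ v : Fin dθ → ℝ)
    (hℓ : DifferentiableAt ℝ (fun u => ℓ u y) (flin f0 J θ' x θ)) :
    HasDerivAt (fun t : ℝ => ℓ (flin f0 J θ' x (θ + t • v)) y)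
      ((J x *ᵥ v) ⬝ᵥ gradloss ℓ y (flin f0 J θ' x θ)) 0 := by
  simp only [flin_add_smul]
  have hline : HasDerivAt (fun t : ℝ => flin f0 J θ' x θ + t • (J x *ᵥ v)) (J x *ᵥ v) 0 := by
    simpa using ((hasDerivAt_id (0 : ℝ)).smul_const (J x *ᵥ v)).const_add (flin f0 J θ' x θ)
  have hℓ' : HasFDerivAt (fun u => ℓ u y) (fderiv ℝ (fun u => ℓ u y) (flin f0 J θ' x θ))
      (flin f0 J θ' x θ + (0 : ℝ) • (J x *ᵥ v)) := by
    simpa using hℓ.hasFDerivAt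
  exact (hℓ'.comp_hasDerivAt 0 hline).congr_deriv
    (ContinuousLinearMap.apply_eq_dotProduct_single _ _)

lemma empRisk_eq {S : Finset (Fin n)} (hS : S.Nonempty) (θ : Fin dθ → ℝ) :
    empRisk f0 J θ' X Y ℓ lam S θ =
      (S.card : ℝ)⁻¹ * ∑ i ∈ S, ℓ (flin f0 J θ' (X i) θ) (Y i) + lam / 2 * sqnorm (θ - θ') := by
  have hcard : (S.card : ℝ) ≠ 0 := Nat.cast_ne_zero.2 hS.card_pos.ne'
  rw [empRisk, sum_add_distrib, sum_const, nsmul_eq_mul, mul_add, inv_mul_cancel_left₀ hcard]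

lemma mulVec_dotProduct_stackedGrad (S : Finset (Fin n)) (θ : Fin dθ → ℝ) (v : Fin dθ → ℝ) :
    (JX J X *ᵥ v) ⬝ᵥ stackedGrad f0 J θ' X Y ℓ S θ =
      (S.card : ℝ)⁻¹ * ∑ i ∈ S, (J (X i) *ᵥ v) ⬝ᵥ gradloss ℓ (Y i) (flin f0 J θ' (X i) θ) := by
  simp only [dotProduct, Fintype.sum_prod_type, stackedGrad, mul_ite, mul_zero, sum_ite_irrel,
    sum_const_zero, sum_ite_mem, univ_inter, mul_sum]
  refine sum_congr rfl fun i _ => sum_congr rfl fun a _ => ?_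
  simp only [JX, mulVec, dotProduct]
  ring

lemma hasDerivAt_empRisk_add_smul {S : Finset (Fin n)} (hS : S.Nonempty) (θ v : Fin dθ → ℝ)
    (hℓ : ∀ i ∈ S, DifferentiableAt ℝ (fun u => ℓ u (Y i)) (flin f0 J θ' (X i) θ)) :
    HasDerivAt (fun t : ℝ => empRisk f0 J θ' X Y ℓ lam S (θ + t • v))
      ((JX J X *ᵥ v) ⬝ᵥ stackedGrad f0 J θ' X Y ℓ S θ + lam * ((θ - θ') ⬝ᵥ v)) 0 := by
  simp only [empRisk_eq f0 J θ' X Y ℓ lam hS, add_sub_right_comm θ]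
  have hloss := HasDerivAt.fun_sum fun i hi =>
    hasDerivAt_loss_flin_add_smul f0 J θ' ℓ (X i) (Y i) θ v (hℓ i hi)
  have hreg := hasDerivAt_sqnorm_add_smul (θ - θ') v
  rw [mulVec_dotProduct_stackedGrad]
  exact ((hloss.const_mul _).add (hreg.const_mul (lam / 2))).congr_deriv (by ring)

lemma sub_eq_of_forall_empRisk_le (hlam : lam ≠ 0) {S : Finset (Fin n)} (hS : S.Nonempty)
    {θ : Fin dθ → ℝ}
    (hℓ : ∀ i ∈ S, DifferentiableAt ℝ (fun u => ℓ u (Y i)) (flin f0 J θ' (X i) θ))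
    (hmin : ∀ θ₁, empRisk f0 J θ' X Y ℓ lam S θ ≤ empRisk f0 J θ' X Y ℓ lam S θ₁) :
    θ - θ' = -lam⁻¹ • ((JX J X)ᵀ *ᵥ stackedGrad f0 J θ' X Y ℓ S θ) := by
  set g := (JX J X)ᵀ *ᵥ stackedGrad f0 J θ' X Y ℓ S θ
  have hperp : ∀ v, v ⬝ᵥ (g + lam • (θ - θ')) = 0 := by
    intro v
    have hloc : IsLocalMin (fun t : ℝ => empRisk f0 J θ' X Y ℓ lam S (θ + t • v)) 0 :=
      Filter.Eventually.of_forall fun t => by simpa using hmin (θ + t • v)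
    have hcrit := hloc.hasDerivAt_eq_zero
      (hasDerivAt_empRisk_add_smul f0 J θ' X Y ℓ lam hS θ v hℓ)
    rw [dotProduct_add, dotProduct_smul, smul_eq_mul, dotProduct_mulVec, vecMul_transpose,
      dotProduct_comm v]
    exact hcrit
  have hg : lam⁻¹ • g + (θ - θ') = 0 := by
    have := congrArg (lam⁻¹ • ·) (dotProduct_self_eq_zero.1 (hperp _))
    simpa [smul_add, smul_smul, inv_mul_cancel₀ hlam] using this
  rw [neg_smul]
  exact eq_neg_of_add_eq_zero_right hg

lemma dalpha_eq_smul_sub (Dr : Finset (Fin n)) (θ θr : Fin dθ → ℝ) :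
    dalpha f0 J θ' X Y ℓ lam Dr θ θr = -lam⁻¹ •
      (stackedGrad f0 J θ' X Y ℓ Dr θr - stackedGrad f0 J θ' X Y ℓ univ θ) := by
  funext q
  by_cases hq : q.1 ∈ Dr <;> simp [dalpha, stackedGrad, hq]

end LinearizedRisk

theorem stmt_2_general {din dout dθ n : ℕ}
    (f0 : (Fin din → ℝ) → Fin dout → ℝ)
    (J : (Fin din → ℝ) → Matrix (Fin dout) (Fin dθ) ℝ)
    (θ' : Fin dθ → ℝ) (X : Fin n → Fin din → ℝ) (Y : Fin n → Fin dout → ℝ)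
    (ℓ : (Fin dout → ℝ) → (Fin dout → ℝ) → ℝ) (lam : ℝ)
    (hdiff : ∀ ytgt, Differentiable ℝ fun u => ℓ u ytgt)
    (hlam : 0 < lam)
    (Dr : Finset (Fin n)) (hDr : Dr.Nonempty)
    (θstar θrstar : Fin dθ → ℝ)
    (hmin : ∀ θ : Fin dθ → ℝ,
      empRisk f0 J θ' X Y ℓ lam Finset.univ θstar ≤ empRisk f0 J θ' X Y ℓ lam Finset.univ θ)
    (hminr : ∀ θ : Fin dθ → ℝ,
      empRisk f0 J θ' X Y ℓ lam Dr θrstar ≤ empRisk f0 J θ' X Y ℓ lam Dr θ) :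
    θrstar - θstar = (JX J X)ᵀ *ᵥ dalpha f0 J θ' X Y ℓ lam Dr θstar θrstar := by
  have hD : (univ : Finset (Fin n)).Nonempty := ⟨hDr.choose, mem_univ _⟩
  have hstar := sub_eq_of_forall_empRisk_le f0 J θ' X Y ℓ lam hlam.ne' hD
    (fun i _ => (hdiff (Y i)).differentiableAt) hmin
  have hrstar := sub_eq_of_forall_empRisk_le f0 J θ' X Y ℓ lam hlam.ne' hDr
    (fun i _ => (hdiff (Y i)).differentiableAt) hminr
  rw [dalpha_eq_smul_sub, mulVec_smul, mulVec_sub, smul_sub, ← hstar, ← hrstar,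
    sub_sub_sub_cancel_right]

/-- Proposition 3.1: for nonempty `D_r ⊆ D`, with `θ̂*`, `θ̂_r*` the unique
minimizers of `L̂_D`, `L̂_{D_r}`, we have `θ̂_r* − θ̂* = J(X)ᵀ Δα_r*`, where `Δα_r*` has
block `(1/λ) ∇_{f^lin(X_f, θ̂*)} L̂_D` on the forget indices and block
`−(1/λ)( ∇_{f^lin(X_r, θ̂_r*)} L̂_{D_r} − ∇_{f^lin(X_r, θ̂*)} L̂_D )` on the retain indices. -/
theorem stmt_2 {din dout dθ n : ℕ} (hn : 0 < n)
    (f0 : (Fin din → ℝ) → Fin dout → ℝ)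
    (J : (Fin din → ℝ) → Matrix (Fin dout) (Fin dθ) ℝ)
    (θ' : Fin dθ → ℝ) (X : Fin n → Fin din → ℝ) (Y : Fin n → Fin dout → ℝ)
    (ℓ : (Fin dout → ℝ) → (Fin dout → ℝ) → ℝ) (lam : ℝ)
    (hℓ0 : ∀ u ytgt, 0 ≤ ℓ u ytgt)
    (hconv : ∀ ytgt, ConvexOn ℝ Set.univ fun u => ℓ u ytgt)
    (hdiff : ∀ ytgt, Differentiable ℝ fun u => ℓ u ytgt)
    (hlam : 0 < lam)
    (Dr : Finset (Fin n)) (hDr : Dr.Nonempty)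
    (θstar θrstar : Fin dθ → ℝ)
    (hmin : ∀ θ : Fin dθ → ℝ,
      empRisk f0 J θ' X Y ℓ lam Finset.univ θstar ≤ empRisk f0 J θ' X Y ℓ lam Finset.univ θ)
    (hminr : ∀ θ : Fin dθ → ℝ,
      empRisk f0 J θ' X Y ℓ lam Dr θrstar ≤ empRisk f0 J θ' X Y ℓ lam Dr θ) :
    θrstar - θstar = (JX J X)ᵀ *ᵥ dalpha f0 J θ' X Y ℓ lam Dr θstar θrstar :=
  stmt_2_general f0 J θ' X Y ℓ lam hdiff hlam Dr hDr θstar θrstar hmin hminr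
end
end

section
/- (Proposition 3.3) Assume ℓ is convex in its first argument, λ > 0, and J(X) has full row rank. Then for any nonempty D_r ⊆ D, the dual problem min_{Δα ∈ ℝ^{d_out·n}} L̃_{D_r}(Δα) and the constrained problem min_{θ ∈ C} L̂_{D_r}(θ) over C := θ̂* + col(J(X)ᵀ) each have a unique minimizer, denoted Δα_r* and θ̂_{r,c}* respectively, and these are related by φ(Δα_r*) = θ̂_{r,c}* and Δα_r* = φ⁻¹(θ̂_{r,c}*); in particular, φ is injective. -/
open Finset Matrix

noncomputable section

lemma sqnorm_nonneg' {ι : Type*} [Fintype ι] (v : ι → ℝ) : 0 ≤ sqnorm v :=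
  Finset.sum_nonneg fun _ _ => sq_nonneg _

lemma sq_le_sqnorm {ι : Type*} [Fintype ι] (v : ι → ℝ) (i : ι) : v i ^ 2 ≤ sqnorm v :=
  Finset.single_le_sum (fun j _ => sq_nonneg (v j)) (Finset.mem_univ i)

lemma eq_zero_of_sqnorm_nonpos {ι : Type*} [Fintype ι] {v : ι → ℝ} (h : sqnorm v ≤ 0) :
    v = 0 := by
  funext i
  have h1 : v i ^ 2 = 0 := le_antisymm (le_trans (sq_le_sqnorm v i) h) (sq_nonneg _)
  exact pow_eq_zero_iff two_ne_zero |>.mp h1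

lemma sqnorm_mulVec_le {ι κ : Type*} [Fintype ι] [Fintype κ]
    (M : Matrix ι κ ℝ) (v : κ → ℝ) :
    sqnorm (M *ᵥ v) ≤ (∑ i, ∑ j, M i j ^ 2) * sqnorm v := by
  unfold sqnorm
  rw [Finset.sum_mul]
  refine Finset.sum_le_sum fun i _ => ?_
  have : (M *ᵥ v) i = ∑ j, M i j * v j := by
    simp [Matrix.mulVec, dotProduct]
  rw [this]
  exact Finset.sum_mul_sq_le_sq_mul_sq Finset.univ _ _

lemma sqnorm_midpoint {ι : Type*} [Fintype ι] (u v : ι → ℝ) :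
    sqnorm ((2:ℝ)⁻¹ • (u + v)) = (sqnorm u + sqnorm v) / 2 - sqnorm (u - v) / 4 := by
  simp only [sqnorm, Pi.smul_apply, Pi.add_apply, Pi.sub_apply, smul_eq_mul]
  rw [← Finset.sum_add_distrib, Finset.sum_div, Finset.sum_div, ← Finset.sum_sub_distrib]
  exact Finset.sum_congr rfl fun i _ => by ring

lemma sqnorm_add_le {ι : Type*} [Fintype ι] (u v : ι → ℝ) :
    sqnorm (u + v) ≤ 2 * sqnorm u + 2 * sqnorm v := by
  simp only [sqnorm, Pi.add_apply]
  rw [Finset.mul_sum, Finset.mul_sum, ← Finset.sum_add_distrib]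
  exact Finset.sum_le_sum fun i _ => by nlinarith [sq_nonneg (u i - v i)]

lemma continuous_mulVec' {ι κ : Type*} [Fintype ι] [Fintype κ] (M : Matrix ι κ ℝ) :
    Continuous fun v : κ → ℝ => M *ᵥ v := by
  refine continuous_pi fun i => ?_
  simp only [Matrix.mulVec, dotProduct]
  exact continuous_finset_sum _ fun j _ => continuous_const.mul (continuous_apply j)

lemma continuous_sqnorm {ι : Type*} [Fintype ι] : Continuous (sqnorm (ι := ι)) := by
  unfold sqnorm
  exact continuous_finset_sum _ fun i _ => (continuous_apply i).pow 2


/-- Proposition 3.3: if `ℓ` is convex in its first argument, `λ > 0`, and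
`J(X)` has full row rank, then for any nonempty `D_r ⊆ D` the dual problem
`min_{Δα} L̃_{D_r}(Δα)` and the constrained problem `min_{θ ∈ C} L̂_{D_r}(θ)` over
`C = range φ` each have a unique minimizer `Δα_r*` resp. `θ̂_{r,c}*`, related by
`φ(Δα_r*) = θ̂_{r,c}*` and `Δα_r* = φ⁻¹(θ̂_{r,c}*)`; in particular `φ` is injective. -/
theorem stmt_5 {din dout dθ n : ℕ} (hn : 0 < n)
    (f0 : (Fin din → ℝ) → Fin dout → ℝ)
    (J : (Fin din → ℝ) → Matrix (Fin dout) (Fin dθ) ℝ)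
    (θ' : Fin dθ → ℝ) (X : Fin n → Fin din → ℝ) (Y : Fin n → Fin dout → ℝ)
    (ℓ : (Fin dout → ℝ) → (Fin dout → ℝ) → ℝ) (lam : ℝ)
    (hℓ0 : ∀ u ytgt, 0 ≤ ℓ u ytgt)
    (hconv : ∀ ytgt, ConvexOn ℝ Set.univ fun u => ℓ u ytgt)
    (hdiff : ∀ ytgt, Differentiable ℝ fun u => ℓ u ytgt)
    (hlam : 0 < lam)
    (hrank : LinearIndependent ℝ fun q : Fin n × Fin dout => (JX J X q : Fin dθ → ℝ))
    (θstar : Fin dθ → ℝ)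
    (hmin : ∀ θ : Fin dθ → ℝ,
      empRisk f0 J θ' X Y ℓ lam Finset.univ θstar ≤ empRisk f0 J θ' X Y ℓ lam Finset.univ θ)
    (Dr : Finset (Fin n)) (hDr : Dr.Nonempty) :
    Function.Injective (phi J X θstar) ∧
    ∃ (Δαr : Fin n × Fin dout → ℝ) (θrc : Fin dθ → ℝ),
      (∀ β : Fin n × Fin dout → ℝ,
        dualRisk f0 J θ' X Y ℓ lam θstar Dr Δαr ≤ dualRisk f0 J θ' X Y ℓ lam θstar Dr β) ∧
      (∀ β : Fin n × Fin dout → ℝ,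
        (∀ γ : Fin n × Fin dout → ℝ,
          dualRisk f0 J θ' X Y ℓ lam θstar Dr β ≤ dualRisk f0 J θ' X Y ℓ lam θstar Dr γ) →
        β = Δαr) ∧
      θrc ∈ Set.range (phi J X θstar) ∧
      (∀ θ ∈ Set.range (phi J X θstar),
        empRisk f0 J θ' X Y ℓ lam Dr θrc ≤ empRisk f0 J θ' X Y ℓ lam Dr θ) ∧
      (∀ θc ∈ Set.range (phi J X θstar),
        (∀ θ ∈ Set.range (phi J X θstar),
          empRisk f0 J θ' X Y ℓ lam Dr θc ≤ empRisk f0 J θ' X Y ℓ lam Dr θ) → θc = θrc) ∧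
      phi J X θstar Δαr = θrc ∧
      (∀ β : Fin n × Fin dout → ℝ, phi J X θstar β = θrc → β = Δαr) := by
  classical
  have hcard : (Dr.card : ℝ) ≠ 0 := (Nat.cast_pos.mpr hDr.card_pos).ne'
  have hc0 : (0:ℝ) ≤ (Dr.card : ℝ)⁻¹ := inv_nonneg.mpr (Nat.cast_nonneg _)
  -- injectivity of mulVec with the transposed stacked Jacobian
  have hTzero : ∀ β : Fin n × Fin dout → ℝ, (JX J X)ᵀ *ᵥ β = 0 → β = 0 := by
    intro β hβ
    have hsum : ∑ q : Fin n × Fin dout, β q • JX J X q = 0 := by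
      funext p
      have h1 := congrFun hβ p
      simp only [Matrix.mulVec, dotProduct, Matrix.transpose_apply, Pi.zero_apply] at h1
      rw [Finset.sum_apply]
      simpa [Pi.smul_apply, smul_eq_mul, mul_comm] using h1
    funext q
    exact Fintype.linearIndependent_iff.mp hrank β hsum q
  have hTinj : ∀ β γ : Fin n × Fin dout → ℝ, (JX J X)ᵀ *ᵥ β = (JX J X)ᵀ *ᵥ γ → β = γ := by
    intro β γ h
    have h0 : (JX J X)ᵀ *ᵥ (β - γ) = 0 := by rw [Matrix.mulVec_sub, h, sub_self]
    exact sub_eq_zero.mp (hTzero _ h0)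
  have hphi_inj : Function.Injective (phi J X θstar) := by
    intro β γ h
    exact hTinj β γ (add_left_cancel (show θstar + (JX J X)ᵀ *ᵥ β = θstar + (JX J X)ᵀ *ᵥ γ from h))
  -- basic algebra of phi
  have hphi_sub : ∀ β γ : Fin n × Fin dout → ℝ,
      phi J X θstar β - phi J X θstar γ = (JX J X)ᵀ *ᵥ (β - γ) := by
    intro β γ
    unfold phi
    rw [Matrix.mulVec_sub]
    abel
  have hphi_mid : ∀ β γ : Fin n × Fin dout → ℝ,
      phi J X θstar ((2:ℝ)⁻¹ • (β + γ)) = (2:ℝ)⁻¹ • (phi J X θstar β + phi J X θstar γ) := by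
    intro β γ
    unfold phi
    rw [Matrix.mulVec_smul, Matrix.mulVec_add]
    funext p
    simp only [Pi.add_apply, Pi.smul_apply, smul_eq_mul]
    ring
  have hflin_phi : ∀ (x : Fin din → ℝ) (β : Fin n × Fin dout → ℝ),
      glin f0 J θ' X θstar x β = flin f0 J θ' x (phi J X θstar β) := by
    intro x β
    unfold glin flin phi KxX
    rw [show θstar + (JX J X)ᵀ *ᵥ β - θ' = (θstar - θ') + (JX J X)ᵀ *ᵥ β from
      add_sub_right_comm θstar _ θ', Matrix.mulVec_add, ← Matrix.mulVec_mulVec, add_assoc]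
  have hdual : ∀ β : Fin n × Fin dout → ℝ,
      dualRisk f0 J θ' X Y ℓ lam θstar Dr β = empRisk f0 J θ' X Y ℓ lam Dr (phi J X θstar β) := by
    intro β
    unfold dualRisk empRisk
    congr 1
    exact Finset.sum_congr rfl fun i _ => by rw [hflin_phi]
  have hemp_split : ∀ θ : Fin dθ → ℝ, empRisk f0 J θ' X Y ℓ lam Dr θ
      = (Dr.card : ℝ)⁻¹ * (∑ i ∈ Dr, ℓ (flin f0 J θ' (X i) θ) (Y i))
        + lam / 2 * sqnorm (θ - θ') := by
    intro θ
    unfold empRisk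
    rw [Finset.sum_add_distrib, Finset.sum_const, nsmul_eq_mul, mul_add, ← mul_assoc,
      inv_mul_cancel₀ hcard, one_mul]
  set F : (Fin n × Fin dout → ℝ) → ℝ :=
    fun β => empRisk f0 J θ' X Y ℓ lam Dr (phi J X θstar β) with hF
  -- midpoint convexity of the loss
  have hmidℓ : ∀ (y u v : Fin dout → ℝ),
      ℓ ((2:ℝ)⁻¹ • (u + v)) y ≤ 2⁻¹ * ℓ u y + 2⁻¹ * ℓ v y := by
    intro y u v
    have h := (hconv y).2 (Set.mem_univ u) (Set.mem_univ v)
      (by norm_num : (0:ℝ) ≤ 2⁻¹) (by norm_num : (0:ℝ) ≤ 2⁻¹) (by norm_num)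
    rwa [← smul_add] at h
  -- key strict-convexity inequality
  have hkey : ∀ β γ : Fin n × Fin dout → ℝ,
      F ((2:ℝ)⁻¹ • (β + γ)) ≤ 2⁻¹ * F β + 2⁻¹ * F γ
        - lam / 8 * sqnorm ((JX J X)ᵀ *ᵥ (β - γ)) := by
    intro β γ
    have e1 : phi J X θstar ((2:ℝ)⁻¹ • (β + γ)) - θ'
        = (2:ℝ)⁻¹ • ((phi J X θstar β - θ') + (phi J X θstar γ - θ')) := by
      rw [hphi_mid]
      funext p
      simp only [Pi.smul_apply, Pi.add_apply, Pi.sub_apply, smul_eq_mul]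
      ring
    have e2 : (phi J X θstar β - θ') - (phi J X θstar γ - θ') = (JX J X)ᵀ *ᵥ (β - γ) := by
      rw [← hphi_sub]
      abel
    have hq : sqnorm (phi J X θstar ((2:ℝ)⁻¹ • (β + γ)) - θ')
        = (sqnorm (phi J X θstar β - θ') + sqnorm (phi J X θstar γ - θ')) / 2
          - sqnorm ((JX J X)ᵀ *ᵥ (β - γ)) / 4 := by
      rw [e1, sqnorm_midpoint, e2]
    have hsum : ∑ i ∈ Dr, ℓ (flin f0 J θ' (X i) (phi J X θstar ((2:ℝ)⁻¹ • (β + γ)))) (Y i)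
        ≤ ∑ i ∈ Dr, (2⁻¹ * ℓ (flin f0 J θ' (X i) (phi J X θstar β)) (Y i)
            + 2⁻¹ * ℓ (flin f0 J θ' (X i) (phi J X θstar γ)) (Y i)) := by
      refine Finset.sum_le_sum fun i _ => ?_
      have hf : flin f0 J θ' (X i) (phi J X θstar ((2:ℝ)⁻¹ • (β + γ)))
          = (2:ℝ)⁻¹ • (flin f0 J θ' (X i) (phi J X θstar β)
              + flin f0 J θ' (X i) (phi J X θstar γ)) := by
        rw [hphi_mid]
        unfold flin
        rw [show (2:ℝ)⁻¹ • (phi J X θstar β + phi J X θstar γ) - θ'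
            = (2:ℝ)⁻¹ • ((phi J X θstar β - θ') + (phi J X θstar γ - θ')) from by
          funext p
          simp only [Pi.smul_apply, Pi.add_apply, Pi.sub_apply, smul_eq_mul]
          ring, Matrix.mulVec_smul, Matrix.mulVec_add]
        funext a
        simp only [Pi.add_apply, Pi.smul_apply, smul_eq_mul]
        ring
      rw [hf]
      exact hmidℓ (Y i) _ _
    have hS := mul_le_mul_of_nonneg_left hsum hc0
    rw [Finset.sum_add_distrib, ← Finset.mul_sum, ← Finset.mul_sum] at hS
    rw [hF]
    simp only []
    rw [hemp_split, hemp_split, hemp_split, hq]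
    set d := sqnorm ((JX J X)ᵀ *ᵥ (β - γ))
    nlinarith [hS]
  -- continuity
  have hflincont : ∀ x : Fin din → ℝ, Continuous fun θ => flin f0 J θ' x θ := by
    intro x
    unfold flin
    exact continuous_const.add ((continuous_mulVec' (J x)).comp (continuous_id.sub continuous_const))
  have hphicont : Continuous (phi J X θstar) := by
    unfold phi
    exact continuous_const.add (continuous_mulVec' _)
  have hFcont : Continuous F := by
    have hFe : F = fun β => (Dr.card : ℝ)⁻¹
        * (∑ i ∈ Dr, ℓ (flin f0 J θ' (X i) (phi J X θstar β)) (Y i))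
        + lam / 2 * sqnorm (phi J X θstar β - θ') := funext fun β => hemp_split _
    rw [hFe]
    refine (continuous_const.mul (continuous_finset_sum _ fun i _ => ?_)).add
      (continuous_const.mul (continuous_sqnorm.comp (hphicont.sub continuous_const)))
    exact ((hdiff (Y i)).continuous).comp ((hflincont (X i)).comp hphicont)
  -- coercivity via a left inverse
  obtain ⟨g, hg⟩ := LinearMap.exists_leftInverse_of_injective (Matrix.mulVecLin (JX J X)ᵀ)
    (LinearMap.ker_eq_bot.mpr (fun β γ h => hTinj β γ (by
      simpa only [Matrix.mulVecLin_apply] using h)))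
  set C := ∑ i, ∑ j, (LinearMap.toMatrix' g) i j ^ 2 with hC
  have hCnn : 0 ≤ C :=
    Finset.sum_nonneg fun i _ => Finset.sum_nonneg fun j _ => sq_nonneg _
  have hcoer : ∀ β : Fin n × Fin dout → ℝ, sqnorm β ≤ C * sqnorm ((JX J X)ᵀ *ᵥ β) := by
    intro β
    have h1 : g ((JX J X)ᵀ *ᵥ β) = β := by
      have := LinearMap.congr_fun hg β
      simpa only [LinearMap.coe_comp, Function.comp_apply, Matrix.mulVecLin_apply,
        LinearMap.id_coe, id_eq] using this
    have h2 : (LinearMap.toMatrix' g) *ᵥ ((JX J X)ᵀ *ᵥ β) = g ((JX J X)ᵀ *ᵥ β) := by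
      rw [← Matrix.toLin'_apply, Matrix.toLin'_toMatrix']
    calc sqnorm β = sqnorm ((LinearMap.toMatrix' g) *ᵥ ((JX J X)ᵀ *ᵥ β)) := by rw [h2, h1]
    _ ≤ C * sqnorm ((JX J X)ᵀ *ᵥ β) := sqnorm_mulVec_le _ _
  have hFlb : ∀ β : Fin n × Fin dout → ℝ, lam / 2 * sqnorm (phi J X θstar β - θ') ≤ F β := by
    intro β
    rw [hF]
    simp only []
    rw [hemp_split]
    have : (0:ℝ) ≤ (Dr.card : ℝ)⁻¹ * ∑ i ∈ Dr, ℓ (flin f0 J θ' (X i) (phi J X θstar β)) (Y i) :=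
      mul_nonneg hc0 (Finset.sum_nonneg fun i _ => hℓ0 _ _)
    linarith
  have hF0 : (0:ℝ) ≤ F 0 :=
    le_trans (mul_nonneg (by positivity) (sqnorm_nonneg' _)) (hFlb 0)
  set R := C * (2 * (2 / lam * F 0) + 2 * sqnorm (θ' - θstar)) with hR
  have hbound : ∀ β : Fin n × Fin dout → ℝ, F β ≤ F 0 → sqnorm β ≤ R := by
    intro β hb
    have h2 : lam / 2 * sqnorm (phi J X θstar β - θ') ≤ F 0 := le_trans (hFlb β) hb
    have h1 : sqnorm (phi J X θstar β - θ') ≤ 2 / lam * F 0 := by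
      have he : sqnorm (phi J X θstar β - θ')
          = 2 / lam * (lam / 2 * sqnorm (phi J X θstar β - θ')) := by
        field_simp
      rw [he]
      exact mul_le_mul_of_nonneg_left h2 (by positivity)
    have h3 : (JX J X)ᵀ *ᵥ β = (phi J X θstar β - θ') + (θ' - θstar) := by
      unfold phi
      funext p
      simp only [Pi.add_apply, Pi.sub_apply]
      ring
    have h4 : sqnorm ((JX J X)ᵀ *ᵥ β) ≤ 2 * (2 / lam * F 0) + 2 * sqnorm (θ' - θstar) := by
      rw [h3]
      refine le_trans (sqnorm_add_le _ _) ?_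
      linarith
    calc sqnorm β ≤ C * sqnorm ((JX J X)ᵀ *ᵥ β) := hcoer β
    _ ≤ R := by rw [hR]; exact mul_le_mul_of_nonneg_left h4 hCnn
  have hRnn : (0:ℝ) ≤ R := le_trans (sqnorm_nonneg' 0) (hbound 0 le_rfl)
  -- existence of a global minimizer of F
  obtain ⟨β₀, hβ₀mem, hβ₀min⟩ :=
    (isCompact_closedBall (0 : Fin n × Fin dout → ℝ) (Real.sqrt R)).exists_isMinOn
      ⟨0, Metric.mem_closedBall_self (Real.sqrt_nonneg R)⟩ hFcont.continuousOn
  have hglobal : ∀ β : Fin n × Fin dout → ℝ, F β₀ ≤ F β := by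
    intro β
    by_contra hlt
    push_neg at hlt
    have hb0 : F β₀ ≤ F 0 := hβ₀min (Metric.mem_closedBall_self (Real.sqrt_nonneg R))
    have h1 : sqnorm β ≤ R := hbound β (le_of_lt (lt_of_lt_of_le hlt hb0))
    have hmem : β ∈ Metric.closedBall (0 : Fin n × Fin dout → ℝ) (Real.sqrt R) := by
      rw [Metric.mem_closedBall, dist_zero_right]
      refine (pi_norm_le_iff_of_nonneg (Real.sqrt_nonneg R)).mpr fun q => ?_
      rw [Real.norm_eq_abs, ← Real.sqrt_sq_eq_abs]
      exact Real.sqrt_le_sqrt (le_trans (sq_le_sqnorm β q) h1)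
    exact absurd (hβ₀min hmem) (not_le.mpr hlt)
  -- uniqueness of the global minimizer
  have huniq : ∀ β γ : Fin n × Fin dout → ℝ,
      (∀ δ, F β ≤ F δ) → (∀ δ, F γ ≤ F δ) → β = γ := by
    intro β γ hβ hγ
    have h1 := hkey β γ
    have h2 : F β ≤ F ((2:ℝ)⁻¹ • (β + γ)) := hβ _
    have h3 : F γ = F β := le_antisymm (hγ β) (hβ γ)
    have h5 : lam / 8 * sqnorm ((JX J X)ᵀ *ᵥ (β - γ)) ≤ 0 := by linarith
    have h6 : sqnorm ((JX J X)ᵀ *ᵥ (β - γ)) ≤ 0 := by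
      by_contra hpos
      push_neg at hpos
      exact absurd h5 (not_le.mpr (mul_pos (by linarith) hpos))
    have h7 : (JX J X)ᵀ *ᵥ (β - γ) = 0 := eq_zero_of_sqnorm_nonpos h6
    exact sub_eq_zero.mp (hTzero _ h7)
  -- assemble
  refine ⟨hphi_inj, β₀, phi J X θstar β₀, ?_, ?_, ⟨β₀, rfl⟩, ?_, ?_, rfl, ?_⟩
  · intro β
    rw [hdual, hdual]
    exact hglobal β
  · intro β hb
    refine huniq β β₀ (fun δ => ?_) hglobal
    have := hb δ
    rwa [hdual, hdual] at this
  · rintro θ ⟨γ, rfl⟩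
    exact hglobal γ
  · rintro θc ⟨γ, rfl⟩ hθc
    have : γ = β₀ := huniq γ β₀ (fun δ => hθc _ ⟨δ, rfl⟩) hglobal
    rw [this]
  · intro β hb
    exact hphi_inj hb
end
end

section
/- Assume ℓ is convex and differentiable in its first argument, and let D_f ⊆ D be nonempty. Then the gradient of the dual forget risk at Δα = 0 satisfies ∇_{Δα} L̃_{D_f}(0) = K_fᵀ · ∇_{f^lin(X_f, θ̂*)} L̂_{D_f} + λ K α*, where K_f := K(X_f, X), K := K(X, X), ∇_{f^lin(X_f, θ̂*)} L̂_{D_f} ∈ ℝ^{d_out·|D_f|} stacks (1/|D_f|)·∇_u ℓ(u, y) at u = f^lin(x, θ̂*) over (x,y) ∈ D_f, and α* := −(1/λ) ∇_{f^lin(X, θ̂*)} L̂_D ∈ ℝ^{d_out·n}. -/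
open Finset Matrix

noncomputable section

/-! The dual risk is the primal risk composed with the affine reparameterization `φ`, so by the
chain rule its gradient at `0` is `J(X) ∇L̂_{D_f}(θ̂*)`. The loss part of this is the first term;
the regularizer contributes `λ J(X)(θ̂* - θ')`. The first-order condition at the minimizer `θ̂*`
of `L̂_D` is the representer identity `θ̂* - θ' = J(X)ᵀ α*`, which turns the latter into `λ K α*`.
-/

lemma ContinuousLinearMap.apply_eq_dotProduct {ι : Type*} [Fintype ι] [DecidableEq ι]
    (L : (ι → ℝ) →L[ℝ] ℝ) (v : ι → ℝ) : L v = v ⬝ᵥ fun i => L (Pi.single i 1) := by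
  conv_lhs => rw [← univ_sum_single v]
  rw [map_sum]
  refine sum_congr rfl fun i _ => ?_
  rw [← smul_eq_mul, ← map_smul, ← Pi.single_smul, smul_eq_mul, mul_one]

lemma hasFDerivAt_sqnorm {ι : Type*} [Fintype ι] (w : ι → ℝ) :
    HasFDerivAt sqnorm
      (∑ i, (2 * w i) • (ContinuousLinearMap.proj i : (ι → ℝ) →L[ℝ] ℝ)) w := by
  refine (HasFDerivAt.fun_sum (u := univ) fun i _ =>
    (hasFDerivAt_apply (𝕜 := ℝ) i w).pow 2).congr_fderiv ?_
  simp [mul_comm]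

section LinearizedModel

variable {din dout dθ n : ℕ} (f0 : (Fin din → ℝ) → Fin dout → ℝ)
  (J : (Fin din → ℝ) → Matrix (Fin dout) (Fin dθ) ℝ) (θ' : Fin dθ → ℝ)
  (X : Fin n → Fin din → ℝ) (Y : Fin n → Fin dout → ℝ)
  {ℓ : (Fin dout → ℝ) → (Fin dout → ℝ) → ℝ} (lam : ℝ)

lemma hasFDerivAt_flin (x : Fin din → ℝ) (θ : Fin dθ → ℝ) :
    HasFDerivAt (flin f0 J θ' x) (LinearMap.toContinuousLinearMap (J x).mulVecLin) θ :=
  ((LinearMap.toContinuousLinearMap (J x).mulVecLin).hasFDerivAt.comp θ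
    ((hasFDerivAt_id θ).sub_const θ')).const_add (f0 x)

lemma hasFDerivAt_empRisk (hdiff : ∀ ytgt, Differentiable ℝ fun u => ℓ u ytgt)
    (S : Finset (Fin n)) (θ : Fin dθ → ℝ) :
    HasFDerivAt (empRisk f0 J θ' X Y ℓ lam S)
      ((S.card : ℝ)⁻¹ • ∑ i ∈ S,
        ((fderiv ℝ (fun u => ℓ u (Y i)) (flin f0 J θ' (X i) θ)).comp
            (LinearMap.toContinuousLinearMap (J (X i)).mulVecLin) +
          (lam / 2) • ∑ p, (2 * (θ - θ') p) • ContinuousLinearMap.proj p)) θ := by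
  refine HasFDerivAt.const_mul (HasFDerivAt.fun_sum fun i _ => ?_) _
  exact ((hdiff (Y i)).differentiableAt.hasFDerivAt.comp θ
    (hasFDerivAt_flin f0 J θ' (X i) θ)).add
    (((hasFDerivAt_sqnorm (θ - θ')).comp θ ((hasFDerivAt_id θ).sub_const θ')).const_mul (lam / 2))

lemma fderiv_empRisk_apply (hdiff : ∀ ytgt, Differentiable ℝ fun u => ℓ u ytgt)
    (S : Finset (Fin n)) (θ v : Fin dθ → ℝ) :
    fderiv ℝ (empRisk f0 J θ' X Y ℓ lam S) θ v = (S.card : ℝ)⁻¹ * ∑ i ∈ S,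
      ((J (X i) *ᵥ v) ⬝ᵥ gradloss ℓ (Y i) (flin f0 J θ' (X i) θ) + lam * ((θ - θ') ⬝ᵥ v)) := by
  rw [(hasFDerivAt_empRisk f0 J θ' X Y lam hdiff S θ).fderiv]
  simp only [_root_.smul_apply, FunLike.coe_sum, Finset.sum_apply, _root_.add_apply,
    ContinuousLinearMap.comp_apply, LinearMap.coe_toContinuousLinearMap',
    Matrix.mulVecLin_apply, ContinuousLinearMap.proj_apply, smul_eq_mul]
  congr 1
  refine sum_congr rfl fun i _ => ?_
  rw [ContinuousLinearMap.apply_eq_dotProduct]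
  congr 1
  simp only [dotProduct, mul_sum]
  exact sum_congr rfl fun p _ => by ring

lemma flin_phi (θstar : Fin dθ → ℝ) (x : Fin din → ℝ) (Δα : Fin n × Fin dout → ℝ) :
    flin f0 J θ' x (phi J X θstar Δα) = glin f0 J θ' X θstar x Δα := by
  simp only [flin, phi, glin, KxX, ← mulVec_mulVec, add_sub_right_comm, mulVec_add, add_assoc]

lemma dualRisk_eq_empRisk_comp_phi (θstar : Fin dθ → ℝ) (S : Finset (Fin n)) :
    dualRisk f0 J θ' X Y ℓ lam θstar S = empRisk f0 J θ' X Y ℓ lam S ∘ phi J X θstar := by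
  ext Δα
  simp only [dualRisk, empRisk, Function.comp_apply, flin_phi]

lemma fderiv_dualRisk_zero_apply (hdiff : ∀ ytgt, Differentiable ℝ fun u => ℓ u ytgt)
    (θstar : Fin dθ → ℝ) (S : Finset (Fin n)) (v : Fin n × Fin dout → ℝ) :
    fderiv ℝ (dualRisk f0 J θ' X Y ℓ lam θstar S) 0 v =
      fderiv ℝ (empRisk f0 J θ' X Y ℓ lam S) θstar ((JX J X)ᵀ *ᵥ v) := by
  have hphi : HasFDerivAt (phi J X θstar)
      (LinearMap.toContinuousLinearMap (JX J X)ᵀ.mulVecLin) 0 :=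
    (LinearMap.toContinuousLinearMap (JX J X)ᵀ.mulVecLin).hasFDerivAt.const_add θstar
  have hphi0 : phi J X θstar 0 = θstar := by simp [phi]
  have hrisk := (hasFDerivAt_empRisk f0 J θ' X Y lam hdiff S θstar).differentiableAt
  rw [dualRisk_eq_empRisk_comp_phi, fderiv_comp 0 (by rwa [hphi0]) hphi.differentiableAt,
    hphi0, hphi.fderiv]
  rfl

lemma sum_mulVec_dotProduct_eq_JX_mulVec_dotProduct (v : Fin dθ → ℝ)
    (G : Fin n → Fin dout → ℝ) :
    ∑ i, (J (X i) *ᵥ v) ⬝ᵥ G i = (JX J X *ᵥ v) ⬝ᵥ fun r => G r.1 r.2 := by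
  simp only [dotProduct, Fintype.sum_prod_type]
  rfl

lemma mulVec_JX_transpose_mulVec_single (i : Fin n) (q : Fin n × Fin dout) :
    J (X i) *ᵥ ((JX J X)ᵀ *ᵥ Pi.single q 1) = fun a => Kmat J X (i, a) q := by
  rw [mulVec_mulVec, mulVec_single_one]
  rfl

variable (ℓ) in
def alphaStar (θstar : Fin dθ → ℝ) : Fin n × Fin dout → ℝ :=
  fun r => -lam⁻¹ * ((n : ℝ)⁻¹ * gradloss ℓ (Y r.1) (flin f0 J θ' (X r.1) θstar) r.2)

lemma sub_eq_JX_transpose_mulVec_alphaStar (hdiff : ∀ ytgt, Differentiable ℝ fun u => ℓ u ytgt)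
    (hlam : lam ≠ 0) (hn : n ≠ 0) (θstar : Fin dθ → ℝ)
    (hmin : ∀ θ, empRisk f0 J θ' X Y ℓ lam univ θstar ≤ empRisk f0 J θ' X Y ℓ lam univ θ) :
    θstar - θ' = (JX J X)ᵀ *ᵥ alphaStar f0 J θ' X Y ℓ lam θstar := by
  refine dotProduct_eq _ _ fun v => ?_
  have hfoc := congrArg (· v) (IsLocalMin.fderiv_eq_zero (Filter.Eventually.of_forall hmin))
  simp only [fderiv_empRisk_apply f0 J θ' X Y lam hdiff, _root_.zero_apply,
    sum_add_distrib, sum_const, card_univ, Fintype.card_fin, nsmul_eq_mul,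
    sum_mulVec_dotProduct_eq_JX_mulVec_dotProduct] at hfoc
  set G : Fin n × Fin dout → ℝ := fun r => gradloss ℓ (Y r.1) (flin f0 J θ' (X r.1) θstar) r.2
  have hα : alphaStar f0 J θ' X Y ℓ lam θstar = (-lam⁻¹ * (n : ℝ)⁻¹) • G := by
    ext r
    simp [alphaStar, G, mul_assoc]
  rw [dotProduct_comm ((JX J X)ᵀ *ᵥ _), dotProduct_mulVec, vecMul_transpose, hα,
    dotProduct_smul, smul_eq_mul]
  field_simp at hfoc ⊢
  linarith

end LinearizedModel

theorem stmt_12_general {din dout dθ n : ℕ}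
    (f0 : (Fin din → ℝ) → Fin dout → ℝ)
    (J : (Fin din → ℝ) → Matrix (Fin dout) (Fin dθ) ℝ)
    (θ' : Fin dθ → ℝ) (X : Fin n → Fin din → ℝ) (Y : Fin n → Fin dout → ℝ)
    (ℓ : (Fin dout → ℝ) → (Fin dout → ℝ) → ℝ) (lam : ℝ)
    (hdiff : ∀ ytgt, Differentiable ℝ fun u => ℓ u ytgt)
    (hlam : 0 < lam)
    (θstar : Fin dθ → ℝ)
    (hmin : ∀ θ : Fin dθ → ℝ,
      empRisk f0 J θ' X Y ℓ lam Finset.univ θstar ≤ empRisk f0 J θ' X Y ℓ lam Finset.univ θ)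
    (Df : Finset (Fin n)) (hDf : Df.Nonempty) :
    (fun q : Fin n × Fin dout =>
        fderiv ℝ (dualRisk f0 J θ' X Y ℓ lam θstar Df)
          (0 : Fin n × Fin dout → ℝ) (Pi.single q 1)) =
      fun q : Fin n × Fin dout =>
        (∑ i ∈ Df, ∑ a : Fin dout,
            Kmat J X (i, a) q *
              ((Df.card : ℝ)⁻¹ * gradloss ℓ (Y i) (flin f0 J θ' (X i) θstar) a))
        + lam * (Kmat J X *ᵥ (fun r : Fin n × Fin dout =>
            -lam⁻¹ * ((n : ℝ)⁻¹ * gradloss ℓ (Y r.1) (flin f0 J θ' (X r.1) θstar) r.2))) q := by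
  have hcard : (Df.card : ℝ) ≠ 0 := by simpa using hDf.card_pos.ne'
  obtain ⟨i₀, -⟩ := hDf
  have hrep := sub_eq_JX_transpose_mulVec_alphaStar f0 J θ' X Y lam hdiff hlam.ne'
    i₀.pos.ne' θstar hmin
  funext q
  rw [fderiv_dualRisk_zero_apply f0 J θ' X Y lam hdiff,
    fderiv_empRisk_apply f0 J θ' X Y lam hdiff, sum_add_distrib, sum_const, nsmul_eq_mul, mul_add, ← mul_assoc, inv_mul_cancel₀ hcard,
    one_mul, hrep]
  congr 1
  · rw [mul_sum]
    refine sum_congr rfl fun i _ => ?_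
    simp only [mulVec_JX_transpose_mulVec_single, dotProduct, mul_sum]
    exact sum_congr rfl fun a _ => by ring
  · rw [dotProduct_mulVec, vecMul_transpose, mulVec_mulVec, dotProduct_single, mul_one]
    rfl

/-- gradient of the dual forget risk at `Δα = 0`:
`∇_{Δα} L̃_{D_f}(0) = K_fᵀ ∇_{f^lin(X_f, θ̂*)} L̂_{D_f} + λ K α*`, with
`α* = −(1/λ) ∇_{f^lin(X, θ̂*)} L̂_D`. -/
theorem stmt_12 {din dout dθ n : ℕ} (hn : 0 < n)
    (f0 : (Fin din → ℝ) → Fin dout → ℝ)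
    (J : (Fin din → ℝ) → Matrix (Fin dout) (Fin dθ) ℝ)
    (θ' : Fin dθ → ℝ) (X : Fin n → Fin din → ℝ) (Y : Fin n → Fin dout → ℝ)
    (ℓ : (Fin dout → ℝ) → (Fin dout → ℝ) → ℝ) (lam : ℝ)
    (hℓ0 : ∀ u ytgt, 0 ≤ ℓ u ytgt)
    (hconv : ∀ ytgt, ConvexOn ℝ Set.univ fun u => ℓ u ytgt)
    (hdiff : ∀ ytgt, Differentiable ℝ fun u => ℓ u ytgt)
    (hlam : 0 < lam)
    (θstar : Fin dθ → ℝ)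
    (hmin : ∀ θ : Fin dθ → ℝ,
      empRisk f0 J θ' X Y ℓ lam Finset.univ θstar ≤ empRisk f0 J θ' X Y ℓ lam Finset.univ θ)
    (Df : Finset (Fin n)) (hDf : Df.Nonempty) :
    (fun q : Fin n × Fin dout =>
        fderiv ℝ (dualRisk f0 J θ' X Y ℓ lam θstar Df)
          (0 : Fin n × Fin dout → ℝ) (Pi.single q 1)) =
      fun q : Fin n × Fin dout =>
        (∑ i ∈ Df, ∑ a : Fin dout,
            Kmat J X (i, a) q *
              ((Df.card : ℝ)⁻¹ * gradloss ℓ (Y i) (flin f0 J θ' (X i) θstar) a))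
        + lam * (Kmat J X *ᵥ (fun r : Fin n × Fin dout =>
            -lam⁻¹ * ((n : ℝ)⁻¹ * gradloss ℓ (Y r.1) (flin f0 J θ' (X r.1) θstar) r.2))) q :=
  stmt_12_general f0 J θ' X Y ℓ lam hdiff hlam θstar hmin Df hDf
end
end
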